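/- For γ > 0 and fixed x ∈ ℝ^N, Φ ∈ ℝ^{M×N}, y ∈ ℝ^M, consider F_ε(x) = γ‖y − Φx‖₂² + Σ_{n=1}^N log(ε + |x_n|). Then for any x, x' ∈ ℝ^N with ‖x‖₀ < ‖x'‖₀, there exists ε₀ ∈ (0,1) such that for all ε ∈ (0, ε₀): F_ε(x) < F_ε(x'). -/
import Mathlib


theorem stmt_18 (M N : ℕ) (γ : ℝ) (hγ : 0 < γ)
    (Φ : Matrix (Fin M) (Fin N) ℝ) (y : Fin M → ℝ) (x x' : Fin N → ℝ)
    (h0 : (Finset.univ.filter (fun n => x n ≠ 0)).card <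
          (Finset.univ.filter (fun n => x' n ≠ 0)).card) :
    ∃ ε₀ ∈ Set.Ioo (0:ℝ) 1, ∀ ε : ℝ, 0 < ε → ε < ε₀ →
      γ * (∑ m, (y m - Φ.mulVec x m) ^ 2) + (∑ n, Real.log (ε + |x n|)) <
        γ * (∑ m, (y m - Φ.mulVec x' m) ^ 2) + ∑ n, Real.log (ε + |x' n|) := by
  classical
  set S : Finset (Fin N) := Finset.univ.filter (fun n => x n ≠ 0) with hS
  set S' : Finset (Fin N) := Finset.univ.filter (fun n => x' n ≠ 0) with hS'
  set A : ℝ := ∑ m, (y m - Φ.mulVec x m) ^ 2 with hA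
  set A' : ℝ := ∑ m, (y m - Φ.mulVec x' m) ^ 2 with hA'
  set B : ℝ := ∑ n ∈ S, Real.log (1 + |x n|) with hB
  set B' : ℝ := ∑ n ∈ S', Real.log (|x' n|) with hB'
  set C : ℝ := γ * A - γ * A' + B - B' with hC
  set d : ℝ := (S'.card : ℝ) - (S.card : ℝ) with hd
  have hd1 : (1:ℝ) ≤ d := by
    have : (S.card : ℝ) + 1 ≤ (S'.card : ℝ) := by exact_mod_cast h0
    simp only [hd]; linarith
  have hdpos : (0:ℝ) < d := by linarith
  set ε₀ : ℝ := min (1/2) (Real.exp (-C / d)) with hε₀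
  have hε₀pos : 0 < ε₀ := lt_min (by norm_num) (Real.exp_pos _)
  refine ⟨ε₀, ⟨hε₀pos, lt_of_le_of_lt (min_le_left _ _) (by norm_num)⟩, ?_⟩
  intro ε hε hεlt
  have hε1 : ε < 1 := lt_of_lt_of_le hεlt (le_trans (min_le_left _ _) (by norm_num))
  have hlog : Real.log ε < -C / d := by
    calc Real.log ε < Real.log ε₀ := Real.log_lt_log hε hεlt
      _ ≤ Real.log (Real.exp (-C / d)) := Real.log_le_log hε₀pos (min_le_right _ _)
      _ = -C / d := Real.log_exp _
  have hdlog : d * Real.log ε < -C := by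
    have := (lt_div_iff₀ hdpos).mp hlog
    linarith
  -- split the sum for x
  have hsplitx : (∑ n, Real.log (ε + |x n|)) =
      (∑ n ∈ S, Real.log (ε + |x n|)) +
      ((Finset.univ.filter (fun n => ¬ x n ≠ 0)).card : ℝ) * Real.log ε := by
    rw [← Finset.sum_filter_add_sum_filter_not Finset.univ (fun n => x n ≠ 0)]
    congr 1
    rw [Finset.sum_congr rfl (fun n hn => ?_), Finset.sum_const, nsmul_eq_mul]
    simp only [Finset.mem_filter, not_not] at hn
    rw [hn.2, abs_zero, add_zero]
  have hsplitx' : (∑ n, Real.log (ε + |x' n|)) =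
      (∑ n ∈ S', Real.log (ε + |x' n|)) +
      ((Finset.univ.filter (fun n => ¬ x' n ≠ 0)).card : ℝ) * Real.log ε := by
    rw [← Finset.sum_filter_add_sum_filter_not Finset.univ (fun n => x' n ≠ 0)]
    congr 1
    rw [Finset.sum_congr rfl (fun n hn => ?_), Finset.sum_const, nsmul_eq_mul]
    simp only [Finset.mem_filter, not_not] at hn
    rw [hn.2, abs_zero, add_zero]
  have hBbound : (∑ n ∈ S, Real.log (ε + |x n|)) ≤ B := by
    apply Finset.sum_le_sum
    intro n _
    exact Real.log_le_log (by positivity) (by linarith [abs_nonneg (x n)])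
  have hB'bound : B' ≤ (∑ n ∈ S', Real.log (ε + |x' n|)) := by
    apply Finset.sum_le_sum
    intro n hn
    simp only [hS', Finset.mem_filter] at hn
    exact Real.log_le_log (abs_pos.mpr hn.2) (by linarith [abs_nonneg (x' n)])
  -- card relations
  have hcard : (Finset.univ.filter (fun n => x n ≠ 0)).card +
      (Finset.univ.filter (fun n => ¬ x n ≠ 0)).card = N := by
    rw [Finset.card_filter_add_card_filter_not]; simp
  have hcard' : (Finset.univ.filter (fun n => x' n ≠ 0)).card +
      (Finset.univ.filter (fun n => ¬ x' n ≠ 0)).card = N := by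
    rw [Finset.card_filter_add_card_filter_not]; simp
  have hm : ((Finset.univ.filter (fun n => ¬ x n ≠ 0)).card : ℝ) = (N : ℝ) - (S.card : ℝ) := by
    have := hcard; push_cast [← this]; ring
  have hm' : ((Finset.univ.filter (fun n => ¬ x' n ≠ 0)).card : ℝ) = (N : ℝ) - (S'.card : ℝ) := by
    have := hcard'; push_cast [← this]; ring
  rw [hsplitx, hsplitx', hm, hm']
  have hlogε : Real.log ε < 0 := Real.log_neg hε hε1
  nlinarith [hBbound, hB'bound, hdlog]
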